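/- arXiv:1305.4161 — 2 statements merged into one kernel-verified Lean document; each statement's English description precedes it below -/
import Mathlib

section
/- Let (X,d) be a metric space and μ a Borel measure on X that is doubling with constant C_μ, and let λ ≥ 1. Then there exists a constant C, depending only on λ and C_μ, such that for every countable collection (B_i) of pairwise disjoint balls B_i = B(x_i, r_i) in X and every sequence (a_i) of non-negative real numbers, one has ∫_X ( ∑_i a_i·χ_{B(x_i, λ·r_i)} )² dμ ≤ C · ∫_X ( ∑_i a_i·χ_{B(x_i, r_i)} )² dμ, where χ_E denotes the characteristic function of the set E. -/
open Metric Set MeasureTheory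
open scoped NNReal ENNReal
open Finset Filter
open scoped Topology

universe u


namespace DoublingBalls

variable {X : Type u} [MetricSpace X] [MeasurableSpace X] [BorelSpace X]

omit [BorelSpace X] in
lemma dbl_pow (μ : Measure X) (Cd : ℝ≥0)
    (hC : ∀ (x : X) (r : ℝ), 0 < r → μ (ball x (2 * r)) ≤ Cd * μ (ball x r))
    (k : ℕ) (x : X) {r : ℝ} (hr : 0 < r) :
    μ (ball x (2 ^ k * r)) ≤ (Cd : ℝ≥0∞) ^ k * μ (ball x r) := by
  induction k with
  | zero => simp
  | succ k ih =>
    have h2 : (0:ℝ) < 2 ^ k * r := by positivity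
    calc μ (ball x (2 ^ (k+1) * r)) = μ (ball x (2 * (2 ^ k * r))) := by
          rw [show (2:ℝ) ^ (k+1) * r = 2 * (2 ^ k * r) by ring]
      _ ≤ Cd * μ (ball x (2 ^ k * r)) := hC x _ h2
      _ ≤ Cd * ((Cd : ℝ≥0∞) ^ k * μ (ball x r)) := by gcongr
      _ = (Cd : ℝ≥0∞) ^ (k+1) * μ (ball x r) := by ring

omit [BorelSpace X] in
lemma dbl_scale (μ : Measure X) (Cd : ℝ≥0)
    (hC : ∀ (x : X) (r : ℝ), 0 < r → μ (ball x (2 * r)) ≤ Cd * μ (ball x r))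
    {t : ℝ} (k : ℕ) (ht : 0 < t) (htk : t ≤ 2 ^ k) (x : X) (r : ℝ) :
    μ (ball x (t * r)) ≤ (Cd : ℝ≥0∞) ^ k * μ (ball x r) := by
  rcases le_or_gt r 0 with hr | hr
  · have h0 : t * r ≤ 0 := mul_nonpos_iff.2 (Or.inl ⟨ht.le, hr⟩)
    rw [ball_eq_empty.2 h0]
    simp
  · calc μ (ball x (t * r))
        ≤ μ (ball x (2 ^ k * r)) := measure_mono (ball_subset_ball (by nlinarith))
      _ ≤ (Cd : ℝ≥0∞) ^ k * μ (ball x r) := dbl_pow μ Cd hC k x hr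


noncomputable def pf (x : ℕ → X) (r : ℕ → ℝ) (a : ℕ → ℝ≥0) (m : ℕ) (t : ℝ) : X → ℝ≥0∞ :=
  fun y => ∑ i ∈ Finset.range m, (ball (x i) (t * r i)).indicator (fun _ => (a i : ℝ≥0∞)) y

noncomputable def Phi2 (μ : Measure X) (x : ℕ → X) (r : ℕ → ℝ) (a : ℕ → ℝ≥0) (m : ℕ)
    (t s : ℝ) : ℝ≥0∞ :=
  ∑ i ∈ Finset.range m, ∑ j ∈ Finset.range m,
    (a i : ℝ≥0∞) * (a j : ℝ≥0∞) * μ (ball (x i) (t * r i) ∩ ball (x j) (s * r j))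

omit [BorelSpace X] in
lemma pf_meas (x : ℕ → X) (r : ℕ → ℝ) (a : ℕ → ℝ≥0) (m : ℕ) (t : ℝ)
    [OpensMeasurableSpace X] : Measurable (pf x r a m t) :=
  Finset.measurable_sum _ fun _ _ => measurable_const.indicator measurableSet_ball

variable [OpensMeasurableSpace X]

omit [BorelSpace X] in
lemma pf_expand (μ : Measure X) (x : ℕ → X) (r : ℕ → ℝ) (a : ℕ → ℝ≥0) (m : ℕ) (t s : ℝ) :
    ∫⁻ y, pf x r a m t y * pf x r a m s y ∂μ = Phi2 μ x r a m t s := by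
  unfold pf Phi2
  have hms : ∀ (u : ℝ) (i j : ℕ), Measurable fun y =>
      (ball (x i) (t * r i)).indicator (fun _ => (a i : ℝ≥0∞)) y *
      (ball (x j) (s * r j)).indicator (fun _ => (a j : ℝ≥0∞)) y :=
    fun u i j => (measurable_const.indicator measurableSet_ball).mul
      (measurable_const.indicator measurableSet_ball)
  simp_rw [Finset.sum_mul_sum]
  rw [lintegral_finset_sum _ (fun i _ => Finset.measurable_sum _ fun j _ => hms t i j)]
  refine Finset.sum_congr rfl fun i _ => ?_
  rw [lintegral_finset_sum _ (fun j _ => hms t i j)]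
  refine Finset.sum_congr rfl fun j _ => ?_
  have hpt : ∀ y : X, (ball (x i) (t * r i)).indicator (fun _ => (a i : ℝ≥0∞)) y *
      (ball (x j) (s * r j)).indicator (fun _ => (a j : ℝ≥0∞)) y =
      (ball (x i) (t * r i) ∩ ball (x j) (s * r j)).indicator
        (fun _ => (a i : ℝ≥0∞) * (a j : ℝ≥0∞)) y :=
    fun y => (Set.inter_indicator_mul _ _ _).symm
  simp_rw [hpt]
  rw [lintegral_indicator (measurableSet_ball.inter measurableSet_ball),
    setLIntegral_const]

omit [BorelSpace X] in
lemma pf_sq (μ : Measure X) (x : ℕ → X) (r : ℕ → ℝ) (a : ℕ → ℝ≥0) (m : ℕ) (t : ℝ) :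
    ∫⁻ y, pf x r a m t y ^ 2 ∂μ = Phi2 μ x r a m t t := by
  simp_rw [pow_two]
  exact pf_expand μ x r a m t t

omit [BorelSpace X] in
lemma cauchy (μ : Measure X) (x : ℕ → X) (r : ℕ → ℝ) (a : ℕ → ℝ≥0) (m : ℕ) (t s : ℝ) :
    Phi2 μ x r a m t s ≤
      (Phi2 μ x r a m t t) ^ (1/2 : ℝ) * (Phi2 μ x r a m s s) ^ (1/2 : ℝ) := by
  rw [← pf_expand μ x r a m t s, ← pf_sq μ x r a m t, ← pf_sq μ x r a m s]
  have hconj : Real.HolderConjugate 2 2 := Real.HolderConjugate.two_two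
  have := ENNReal.lintegral_mul_le_Lp_mul_Lq μ hconj
    (pf_meas x r a m t).aemeasurable (pf_meas x r a m s).aemeasurable
  simp_rw [Pi.mul_apply, ENNReal.rpow_two] at this
  exact this


omit [BorelSpace X] in
lemma pair_bound (μ : Measure X) (Cd : ℝ≥0)
    (hC : ∀ (x : X) (r : ℝ), 0 < r → μ (ball x (2 * r)) ≤ Cd * μ (ball x r))
    {t : ℝ} (k : ℕ) (ht : 1 ≤ t) (htk : t ≤ 2 ^ k)
    (x : ℕ → X) (r : ℕ → ℝ) (a : ℕ → ℝ≥0) {i j : ℕ} (hr : r i ≤ r j) :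
    (a i : ℝ≥0∞) * (a j : ℝ≥0∞) * μ (ball (x i) (t * r i) ∩ ball (x j) (t * r j)) ≤
      (Cd : ℝ≥0∞) ^ k *
        ((a i : ℝ≥0∞) * (a j : ℝ≥0∞) * μ (ball (x i) (1 * r i) ∩ ball (x j) ((2*t+1) * r j))) := by
  have ht0 : (0:ℝ) < t := lt_of_lt_of_le one_pos ht
  rcases Set.eq_empty_or_nonempty (ball (x i) (t * r i) ∩ ball (x j) (t * r j)) with h | ⟨z, hz⟩
  · rw [h]
    simp
  · have hz1 : dist z (x i) < t * r i := mem_ball.1 hz.1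
    have hz2 : dist z (x j) < t * r j := mem_ball.1 hz.2
    have hsub : ball (x i) (r i) ⊆ ball (x j) ((2*t+1) * r j) := by
      intro y hy
      have hy1 : dist y (x i) < r i := mem_ball.1 hy
      have hd : dist y (x j) ≤ dist y (x i) + dist (x i) z + dist z (x j) := by
        calc dist y (x j) ≤ dist y (x i) + dist (x i) (x j) := dist_triangle _ _ _
          _ ≤ dist y (x i) + (dist (x i) z + dist z (x j)) := by
              gcongr
              exact dist_triangle _ _ _
          _ = _ := by ring
      rw [mem_ball]
      have hdz : dist (x i) z < t * r i := by rwa [dist_comm]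
      nlinarith [dist_nonneg (x := y) (y := x i)]
    have hmono : μ (ball (x i) (t * r i) ∩ ball (x j) (t * r j)) ≤
        (Cd : ℝ≥0∞) ^ k * μ (ball (x i) (1 * r i) ∩ ball (x j) ((2*t+1) * r j)) := by
      calc μ (ball (x i) (t * r i) ∩ ball (x j) (t * r j))
          ≤ μ (ball (x i) (t * r i)) := measure_mono inter_subset_left
        _ ≤ (Cd : ℝ≥0∞) ^ k * μ (ball (x i) (r i)) := dbl_scale μ Cd hC k ht0 htk _ _
        _ = (Cd : ℝ≥0∞) ^ k * μ (ball (x i) (1 * r i) ∩ ball (x j) ((2*t+1) * r j)) := by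
            rw [one_mul, Set.inter_eq_left.2 hsub]
    calc (a i : ℝ≥0∞) * (a j : ℝ≥0∞) * μ (ball (x i) (t * r i) ∩ ball (x j) (t * r j))
        ≤ (a i : ℝ≥0∞) * (a j : ℝ≥0∞) *
          ((Cd : ℝ≥0∞) ^ k * μ (ball (x i) (1 * r i) ∩ ball (x j) ((2*t+1) * r j))) := by gcongr
      _ = _ := by ring

omit [BorelSpace X] in
lemma sym_bound (μ : Measure X) (Cd : ℝ≥0)
    (hC : ∀ (x : X) (r : ℝ), 0 < r → μ (ball x (2 * r)) ≤ Cd * μ (ball x r))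
    {t : ℝ} (k : ℕ) (ht : 1 ≤ t) (htk : t ≤ 2 ^ k)
    (x : ℕ → X) (r : ℕ → ℝ) (a : ℕ → ℝ≥0) (m : ℕ) :
    Phi2 μ x r a m t t ≤ 2 * (Cd : ℝ≥0∞) ^ k * Phi2 μ x r a m 1 (2*t+1) := by
  classical
  set g : ℕ → ℕ → ℝ≥0∞ := fun i j => if r i ≤ r j then
    (a i : ℝ≥0∞) * (a j : ℝ≥0∞) * μ (ball (x i) (t * r i) ∩ ball (x j) (t * r j)) else 0
    with hg
  have hsym : ∀ i j, (a i : ℝ≥0∞) * (a j : ℝ≥0∞) *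
      μ (ball (x i) (t * r i) ∩ ball (x j) (t * r j)) ≤ g i j + g j i := by
    intro i j
    rcases le_total (r i) (r j) with h | h
    · rw [hg]
      simp only [if_pos h]
      exact le_add_right le_rfl
    · rw [hg]
      simp only [if_pos h]
      rw [Set.inter_comm]
      calc (a i : ℝ≥0∞) * (a j : ℝ≥0∞) * μ (ball (x j) (t * r j) ∩ ball (x i) (t * r i))
          = (a j : ℝ≥0∞) * (a i : ℝ≥0∞) * μ (ball (x j) (t * r j) ∩ ball (x i) (t * r i)) := by
            ring
        _ ≤ _ := le_add_left le_rfl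
  have hgle : ∀ i j, g i j ≤ (Cd : ℝ≥0∞) ^ k *
      ((a i : ℝ≥0∞) * (a j : ℝ≥0∞) * μ (ball (x i) (1 * r i) ∩ ball (x j) ((2*t+1) * r j))) := by
    intro i j
    simp only [hg]
    split_ifs with h
    · exact pair_bound μ Cd hC k ht htk x r a h
    · exact zero_le
  calc Phi2 μ x r a m t t
      ≤ ∑ i ∈ Finset.range m, ∑ j ∈ Finset.range m, (g i j + g j i) :=
        Finset.sum_le_sum fun i _ => Finset.sum_le_sum fun j _ => hsym i j
    _ = (∑ i ∈ Finset.range m, ∑ j ∈ Finset.range m, g i j) +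
        ∑ i ∈ Finset.range m, ∑ j ∈ Finset.range m, g j i := by
        simp [Finset.sum_add_distrib]
    _ = 2 * ∑ i ∈ Finset.range m, ∑ j ∈ Finset.range m, g i j := by
        rw [Finset.sum_comm (s := Finset.range m) (t := Finset.range m) (f := fun i j => g j i)]
        ring
    _ ≤ 2 * ((Cd : ℝ≥0∞) ^ k * Phi2 μ x r a m 1 (2*t+1)) := by
        gcongr
        rw [Phi2, Finset.mul_sum]
        refine Finset.sum_le_sum fun i _ => ?_
        rw [Finset.mul_sum]
        exact Finset.sum_le_sum fun j _ => hgle i j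
    _ = _ := by ring

omit [BorelSpace X] in
lemma step_bound (μ : Measure X) (Cd : ℝ≥0)
    (hC : ∀ (x : X) (r : ℝ), 0 < r → μ (ball x (2 * r)) ≤ Cd * μ (ball x r))
    {t : ℝ} (k : ℕ) (ht : 1 ≤ t) (htk : t ≤ 2 ^ k)
    (x : ℕ → X) (r : ℕ → ℝ) (a : ℕ → ℝ≥0) (m : ℕ) :
    Phi2 μ x r a m t t ≤ 2 * (Cd : ℝ≥0∞) ^ k * (Phi2 μ x r a m 1 1) ^ (1/2 : ℝ) *
      (Phi2 μ x r a m (2*t+1) (2*t+1)) ^ (1/2 : ℝ) := by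
  calc Phi2 μ x r a m t t
      ≤ 2 * (Cd : ℝ≥0∞) ^ k * Phi2 μ x r a m 1 (2*t+1) := sym_bound μ Cd hC k ht htk x r a m
    _ ≤ 2 * (Cd : ℝ≥0∞) ^ k *
        ((Phi2 μ x r a m 1 1) ^ (1/2 : ℝ) * (Phi2 μ x r a m (2*t+1) (2*t+1)) ^ (1/2 : ℝ)) := by
        gcongr
        exact cauchy μ x r a m 1 (2*t+1)
    _ = _ := by ring

omit [BorelSpace X] in
lemma crude_bound (μ : Measure X) (Cd : ℝ≥0)
    (hC : ∀ (x : X) (r : ℝ), 0 < r → μ (ball x (2 * r)) ≤ Cd * μ (ball x r))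
    {t : ℝ} (k : ℕ) (ht : 1 ≤ t) (htk : t ≤ 2 ^ k)
    (x : ℕ → X) (r : ℕ → ℝ) (a : ℕ → ℝ≥0) (m : ℕ) :
    Phi2 μ x r a m t t ≤ (Cd : ℝ≥0∞) ^ k * (2 * m) * Phi2 μ x r a m 1 1 := by
  have ht0 : (0:ℝ) < t := lt_of_lt_of_le one_pos ht
  set P : ℕ → ℝ≥0∞ := fun i => (a i : ℝ≥0∞) * (a i : ℝ≥0∞) * μ (ball (x i) (r i)) with hP
  have hterm : ∀ i j, (a i : ℝ≥0∞) * (a j : ℝ≥0∞) *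
      μ (ball (x i) (t * r i) ∩ ball (x j) (t * r j)) ≤
      (Cd : ℝ≥0∞) ^ k * (P i + P j) := by
    intro i j
    have h1 : μ (ball (x i) (t * r i) ∩ ball (x j) (t * r j)) ≤
        (Cd : ℝ≥0∞) ^ k * μ (ball (x i) (r i)) :=
      le_trans (measure_mono inter_subset_left) (dbl_scale μ Cd hC k ht0 htk _ _)
    have h2 : μ (ball (x i) (t * r i) ∩ ball (x j) (t * r j)) ≤
        (Cd : ℝ≥0∞) ^ k * μ (ball (x j) (r j)) :=
      le_trans (measure_mono inter_subset_right) (dbl_scale μ Cd hC k ht0 htk _ _)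
    rcases le_total (a i : ℝ≥0∞) (a j : ℝ≥0∞) with h | h
    · calc (a i : ℝ≥0∞) * (a j : ℝ≥0∞) * μ (ball (x i) (t * r i) ∩ ball (x j) (t * r j))
          ≤ (a j : ℝ≥0∞) * (a j : ℝ≥0∞) * ((Cd : ℝ≥0∞) ^ k * μ (ball (x j) (r j))) := by
            gcongr
        _ = (Cd : ℝ≥0∞) ^ k * P j := by rw [hP]; ring
        _ ≤ (Cd : ℝ≥0∞) ^ k * (P i + P j) := by gcongr; exact le_add_self
    · calc (a i : ℝ≥0∞) * (a j : ℝ≥0∞) * μ (ball (x i) (t * r i) ∩ ball (x j) (t * r j))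
          ≤ (a i : ℝ≥0∞) * (a i : ℝ≥0∞) * ((Cd : ℝ≥0∞) ^ k * μ (ball (x i) (r i))) := by
            gcongr
        _ = (Cd : ℝ≥0∞) ^ k * P i := by rw [hP]; ring
        _ ≤ (Cd : ℝ≥0∞) ^ k * (P i + P j) := by gcongr; exact le_add_self.trans (by rw [add_comm])
  have hdiag : ∑ i ∈ Finset.range m, P i ≤ Phi2 μ x r a m 1 1 := by
    rw [Phi2]
    refine Finset.sum_le_sum fun i hi => ?_
    have := Finset.single_le_sum (f := fun j => (a i : ℝ≥0∞) * (a j : ℝ≥0∞) *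
      μ (ball (x i) (1 * r i) ∩ ball (x j) (1 * r j))) (fun j _ => zero_le) hi
    simpa [hP] using this
  calc Phi2 μ x r a m t t
      ≤ ∑ i ∈ Finset.range m, ∑ j ∈ Finset.range m, (Cd : ℝ≥0∞) ^ k * (P i + P j) :=
        Finset.sum_le_sum fun i _ => Finset.sum_le_sum fun j _ => hterm i j
    _ = (Cd : ℝ≥0∞) ^ k * (2 * m) * ∑ i ∈ Finset.range m, P i := by
        have hsum : ∑ i ∈ Finset.range m, ∑ j ∈ Finset.range m, (P i + P j) =
            2 * (m : ℝ≥0∞) * ∑ i ∈ Finset.range m, P i := by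
          calc ∑ i ∈ Finset.range m, ∑ j ∈ Finset.range m, (P i + P j)
              = ∑ i ∈ Finset.range m, ((m : ℝ≥0∞) * P i + ∑ j ∈ Finset.range m, P j) := by
                refine Finset.sum_congr rfl fun i _ => ?_
                rw [Finset.sum_add_distrib, Finset.sum_const, Finset.card_range, nsmul_eq_mul]
            _ = (m : ℝ≥0∞) * (∑ i ∈ Finset.range m, P i) +
                (m : ℝ≥0∞) * ∑ j ∈ Finset.range m, P j := by
                rw [Finset.sum_add_distrib, ← Finset.mul_sum, Finset.sum_const,
                  Finset.card_range, nsmul_eq_mul]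
            _ = _ := by ring
        simp only [← Finset.mul_sum]
        rw [hsum]
        ring
    _ ≤ _ := by gcongr


lemma S_le (n : ℕ) : ∑ k ∈ Finset.range n, ((k:ℝ)+1)*(1/2:ℝ)^k ≤ 4 - (2*n+4)*(1/2:ℝ)^n := by
  induction n with
  | zero => norm_num
  | succ n ih =>
    rw [Finset.sum_range_succ, pow_succ]
    have h2 : (0:ℝ) < (1/2)^n := by positivity
    push_cast
    nlinarith [ih, h2]

lemma nhalf_le (n : ℕ) : (n:ℝ) * (1/2:ℝ)^n ≤ 1 := by
  have h1 : (n:ℝ) ≤ 2^n := by exact_mod_cast (Nat.lt_two_pow_self (n := n)).le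
  have h2 : (0:ℝ) < 2^n := by positivity
  have h3 : (1/2:ℝ)^n = (2^n)⁻¹ := by
    rw [one_div, inv_pow]
  rw [h3, ← div_eq_mul_inv, div_le_one h2]
  exact h1

omit [BorelSpace X] in
lemma diag_le (μ : Measure X) (x : ℕ → X) (r : ℕ → ℝ) (a : ℕ → ℝ≥0) (m : ℕ) :
    ∑ i ∈ Finset.range m, (a i : ℝ≥0∞) * (a i : ℝ≥0∞) * μ (ball (x i) (r i)) ≤
      Phi2 μ x r a m 1 1 := by
  rw [Phi2]
  refine Finset.sum_le_sum fun i hi => ?_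
  have := Finset.single_le_sum (f := fun j => (a i : ℝ≥0∞) * (a j : ℝ≥0∞) *
    μ (ball (x i) (1 * r i) ∩ ball (x j) (1 * r j))) (fun j _ => zero_le) hi
  simpa using this

omit [BorelSpace X] in
lemma iter_bound (μ : Measure X) (Cd : ℝ≥0) (hCd1 : 1 ≤ Cd)
    (hC : ∀ (x : X) (r : ℝ), 0 < r → μ (ball x (2 * r)) ≤ Cd * μ (ball x r))
    (lam : ℝ) (hlam : 1 ≤ lam) (K : ℕ) (hK : lam + 1 ≤ 2 ^ K)
    (x : ℕ → X) (r : ℕ → ℝ) (a : ℕ → ℝ≥0) (m : ℕ)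
    (hne : Phi2 μ x r a m 1 1 ≠ 0) (htop : Phi2 μ x r a m 1 1 ≠ ⊤) (n : ℕ) :
    Phi2 μ x r a m lam lam ≤
      (2 * (Cd : ℝ≥0∞) ^ (K+1)) ^ ((∑ k ∈ Finset.range n, ((k:ℝ)+1) * (1/2:ℝ)^k) : ℝ) *
      (Phi2 μ x r a m 1 1) ^ ((1 - (1/2:ℝ)^n) : ℝ) *
      (Phi2 μ x r a m (2^n * (lam+1) - 1) (2^n * (lam+1) - 1)) ^ ((1/2:ℝ)^n : ℝ) := by
  set M : ℝ≥0∞ := 2 * (Cd : ℝ≥0∞) ^ (K+1) with hM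
  have hCd1' : (1:ℝ≥0∞) ≤ (Cd : ℝ≥0∞) := by exact_mod_cast hCd1
  have hM0 : M ≠ 0 := by
    rw [hM]
    exact mul_ne_zero two_ne_zero (pow_ne_zero _ ((zero_lt_one.trans_le hCd1').ne'))
  have hMtop : M ≠ ⊤ := by
    rw [hM]
    exact ENNReal.mul_ne_top (by norm_num) (ENNReal.pow_ne_top ENNReal.coe_ne_top)
  have ht1 : ∀ n : ℕ, (1:ℝ) ≤ 2^n * (lam+1) - 1 := by
    intro n
    have h1 : (1:ℝ) ≤ 2^n := one_le_pow₀ one_le_two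
    nlinarith
  have htk : ∀ n : ℕ, 2^n * (lam+1) - 1 ≤ (2:ℝ)^(n+K) := by
    intro n
    have h1 : (0:ℝ) < 2^n := by positivity
    have : (2:ℝ)^(n+K) = 2^n * 2^K := pow_add 2 n K
    nlinarith
  induction n with
  | zero =>
    have h0 : (2:ℝ)^0 * (lam+1) - 1 = lam := by norm_num
    rw [h0]
    simp
  | succ n ih =>
    have hrec : 2 * ((2:ℝ)^n * (lam+1) - 1) + 1 = 2^(n+1) * (lam+1) - 1 := by ring
    have hstep := step_bound μ Cd hC (n+K) (ht1 n) (htk n) x r a m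
    rw [hrec] at hstep
    have hεn : (0:ℝ) ≤ (1/2:ℝ)^n := by positivity
    have hMpow : 2 * (Cd : ℝ≥0∞) ^ (n+K) ≤ M ^ (n+1) := by
      rw [hM, mul_pow, ← pow_mul]
      have e1 : (2:ℝ≥0∞) ≤ 2^(n+1) := by
        calc (2:ℝ≥0∞) = 2^1 := (pow_one 2).symm
        _ ≤ 2^(n+1) := pow_le_pow_right₀ one_le_two (by omega)
      have e2 : (Cd : ℝ≥0∞) ^ (n+K) ≤ (Cd : ℝ≥0∞) ^ ((K+1)*(n+1)) :=
        pow_le_pow_right₀ hCd1' (by nlinarith)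
      exact mul_le_mul' e1 e2
    calc Phi2 μ x r a m lam lam
        ≤ M ^ ((∑ k ∈ Finset.range n, ((k:ℝ)+1) * (1/2:ℝ)^k) : ℝ) *
          (Phi2 μ x r a m 1 1) ^ ((1 - (1/2:ℝ)^n) : ℝ) *
          (Phi2 μ x r a m (2^n * (lam+1) - 1) (2^n * (lam+1) - 1)) ^ ((1/2:ℝ)^n : ℝ) := ih
      _ ≤ M ^ ((∑ k ∈ Finset.range n, ((k:ℝ)+1) * (1/2:ℝ)^k) : ℝ) *
          (Phi2 μ x r a m 1 1) ^ ((1 - (1/2:ℝ)^n) : ℝ) *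
          ((2 * (Cd : ℝ≥0∞) ^ (n+K) * (Phi2 μ x r a m 1 1) ^ (1/2 : ℝ) *
            (Phi2 μ x r a m (2^(n+1) * (lam+1) - 1) (2^(n+1) * (lam+1) - 1)) ^ (1/2 : ℝ))
            ^ ((1/2:ℝ)^n : ℝ)) := by
          gcongr
      _ ≤ M ^ ((∑ k ∈ Finset.range n, ((k:ℝ)+1) * (1/2:ℝ)^k) : ℝ) *
          (Phi2 μ x r a m 1 1) ^ ((1 - (1/2:ℝ)^n) : ℝ) *
          ((M ^ (n+1) * (Phi2 μ x r a m 1 1) ^ (1/2 : ℝ) *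
            (Phi2 μ x r a m (2^(n+1) * (lam+1) - 1) (2^(n+1) * (lam+1) - 1)) ^ (1/2 : ℝ))
            ^ ((1/2:ℝ)^n : ℝ)) := by
          gcongr
      _ = _ := by
          rw [ENNReal.mul_rpow_of_nonneg _ _ hεn, ENNReal.mul_rpow_of_nonneg _ _ hεn,
            ← ENNReal.rpow_natCast M (n+1), ← ENNReal.rpow_mul M,
            ← ENNReal.rpow_mul (Phi2 μ x r a m 1 1),
            ← ENNReal.rpow_mul (Phi2 μ x r a m (2^(n+1) * (lam+1) - 1) _)]
          push_cast
          rw [show M ^ ((∑ k ∈ Finset.range n, ((k:ℝ)+1) * (1/2:ℝ)^k) : ℝ) *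
              (Phi2 μ x r a m 1 1) ^ ((1 - (1/2:ℝ)^n) : ℝ) *
              (M ^ (((n:ℝ)+1) * (1/2:ℝ)^n) *
               (Phi2 μ x r a m 1 1) ^ ((1/2 : ℝ) * (1/2:ℝ)^n) *
               (Phi2 μ x r a m (2^(n+1) * (lam+1) - 1) (2^(n+1) * (lam+1) - 1))
                 ^ ((1/2 : ℝ) * (1/2:ℝ)^n)) =
              (M ^ ((∑ k ∈ Finset.range n, ((k:ℝ)+1) * (1/2:ℝ)^k) : ℝ) *
               M ^ (((n:ℝ)+1) * (1/2:ℝ)^n)) *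
              ((Phi2 μ x r a m 1 1) ^ ((1 - (1/2:ℝ)^n) : ℝ) *
               (Phi2 μ x r a m 1 1) ^ ((1/2 : ℝ) * (1/2:ℝ)^n)) *
              (Phi2 μ x r a m (2^(n+1) * (lam+1) - 1) (2^(n+1) * (lam+1) - 1))
                 ^ ((1/2 : ℝ) * (1/2:ℝ)^n) by ring]
          rw [← ENNReal.rpow_add _ _ hM0 hMtop, ← ENNReal.rpow_add _ _ hne htop]
          have e1 : (∑ k ∈ Finset.range n, ((k:ℝ)+1) * (1/2:ℝ)^k) + ((n:ℝ)+1) * (1/2:ℝ)^n =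
              ∑ k ∈ Finset.range (n+1), ((k:ℝ)+1) * (1/2:ℝ)^k := by
            rw [Finset.sum_range_succ]
          have e2 : (1 - (1/2:ℝ)^n) + (1/2:ℝ) * (1/2:ℝ)^n = 1 - (1/2:ℝ)^(n+1) := by
            rw [pow_succ]
            ring
          have e3 : (1/2:ℝ) * (1/2:ℝ)^n = (1/2:ℝ)^(n+1) := by
            rw [pow_succ]
            ring
          rw [e1, e2, e3]


omit [BorelSpace X] in
lemma final_bound (μ : Measure X) (Cd : ℝ≥0) (hCd1 : 1 ≤ Cd)
    (hC : ∀ (x : X) (r : ℝ), 0 < r → μ (ball x (2 * r)) ≤ Cd * μ (ball x r))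
    (lam : ℝ) (hlam : 1 ≤ lam) (K : ℕ) (hK : lam + 1 ≤ 2 ^ K)
    (x : ℕ → X) (r : ℕ → ℝ) (a : ℕ → ℝ≥0) (m : ℕ) :
    Phi2 μ x r a m lam lam ≤
      (2 * (Cd : ℝ≥0∞) ^ (K+1)) ^ 4 * (Cd : ℝ≥0∞) * Phi2 μ x r a m 1 1 := by
  have hCd1' : (1:ℝ≥0∞) ≤ (Cd : ℝ≥0∞) := by exact_mod_cast hCd1
  have hCd0 : (Cd : ℝ≥0∞) ≠ 0 := (zero_lt_one.trans_le hCd1').ne'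
  have hlamK : lam ≤ (2:ℝ) ^ K := by linarith
  have hlam0 : (0:ℝ) < lam := lt_of_lt_of_le one_pos hlam
  rcases eq_or_ne (Phi2 μ x r a m 1 1) ⊤ with htop | htop
  · rw [htop, ENNReal.mul_top]
    · exact le_top
    · exact mul_ne_zero (pow_ne_zero _ (mul_ne_zero two_ne_zero (pow_ne_zero _ hCd0))) hCd0
  rcases eq_or_ne (Phi2 μ x r a m 1 1) 0 with hzero | hne
  · -- degenerate case : all balls have zero measure or zero coefficient
    have hd : ∀ i ∈ Finset.range m, (a i : ℝ≥0∞) * (a i : ℝ≥0∞) * μ (ball (x i) (r i)) = 0 := by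
      have h := diag_le μ x r a m
      rw [hzero, le_zero_iff] at h
      exact fun i hi => (Finset.sum_eq_zero_iff.1 h) i hi
    have : Phi2 μ x r a m lam lam = 0 := by
      rw [Phi2]
      refine Finset.sum_eq_zero fun i hi => Finset.sum_eq_zero fun j _ => ?_
      rcases eq_or_ne (a i) 0 with h0 | h0
      · simp [h0]
      · have hμ0 : μ (ball (x i) (r i)) = 0 := by
          have := hd i hi
          rcases mul_eq_zero.1 this with h | h
          · rcases mul_eq_zero.1 h with h' | h'
            · exact absurd h' (by exact_mod_cast h0)
            · exact absurd h' (by exact_mod_cast h0)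
          · exact h
        have hle : μ (ball (x i) (lam * r i) ∩ ball (x j) (lam * r j)) ≤
            (Cd : ℝ≥0∞) ^ K * μ (ball (x i) (r i)) :=
          le_trans (measure_mono inter_subset_left) (dbl_scale μ Cd hC K hlam0 hlamK _ _)
        rw [hμ0, mul_zero] at hle
        rw [le_zero_iff.1 hle, mul_zero]
    rw [this]
    exact zero_le
  · -- main case
    set Φ1 := Phi2 μ x r a m 1 1 with hΦ1
    set M : ℝ≥0∞ := 2 * (Cd : ℝ≥0∞) ^ (K+1) with hM
    have hM1 : (1:ℝ≥0∞) ≤ M := by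
      rw [hM]
      calc (1:ℝ≥0∞) = 1 * 1 := (one_mul 1).symm
        _ ≤ 2 * (Cd : ℝ≥0∞) ^ (K+1) := mul_le_mul' one_le_two (one_le_pow₀ hCd1')
    have hMtop : M ≠ ⊤ := by
      rw [hM]
      exact ENNReal.mul_ne_top (by norm_num) (ENNReal.pow_ne_top ENNReal.coe_ne_top)
    set g : ℝ≥0 := Cd ^ K * (2 * m) + 1 with hg
    have hgcoe : (g : ℝ≥0∞) = (Cd : ℝ≥0∞) ^ K * (2 * m) + 1 := by
      rw [hg]
      push_cast
      ring
    have hg1 : (1:ℝ≥0) ≤ g := le_add_self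
    have hg0 : (g:ℝ) ≠ 0 := by
      have : (1:ℝ) ≤ (g:ℝ) := by exact_mod_cast hg1
      linarith
    -- the quantitative bound for every n
    have key : ∀ n : ℕ, Phi2 μ x r a m lam lam ≤
        M ^ (4:ℝ) * Φ1 * (Cd : ℝ≥0∞) * (g : ℝ≥0∞) ^ ((1/2:ℝ)^n) := by
      intro n
      have hεn : (0:ℝ) ≤ (1/2:ℝ)^n := by positivity
      have ht1 : (1:ℝ) ≤ 2^n * (lam+1) - 1 := by
        have h1 : (1:ℝ) ≤ 2^n := one_le_pow₀ one_le_two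
        nlinarith
      have htk : 2^n * (lam+1) - 1 ≤ (2:ℝ)^(n+K) := by
        have h1 : (0:ℝ) < 2^n := by positivity
        have : (2:ℝ)^(n+K) = 2^n * 2^K := pow_add 2 n K
        nlinarith
      have hcrude := crude_bound μ Cd hC (n+K) ht1 htk x r a m
      have hiter := iter_bound μ Cd hCd1 hC lam hlam K hK x r a m hne htop n
      have hS : (∑ k ∈ Finset.range n, ((k:ℝ)+1) * (1/2:ℝ)^k) ≤ 4 := by
        have := S_le n
        have h2 : (0:ℝ) ≤ (2*n+4) * (1/2:ℝ)^n := by positivity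
        linarith
      calc Phi2 μ x r a m lam lam
          ≤ M ^ ((∑ k ∈ Finset.range n, ((k:ℝ)+1) * (1/2:ℝ)^k) : ℝ) *
            Φ1 ^ ((1 - (1/2:ℝ)^n) : ℝ) *
            (Phi2 μ x r a m (2^n * (lam+1) - 1) (2^n * (lam+1) - 1)) ^ ((1/2:ℝ)^n : ℝ) := hiter
        _ ≤ M ^ (4:ℝ) * Φ1 ^ ((1 - (1/2:ℝ)^n) : ℝ) *
            ((Cd : ℝ≥0∞) ^ (n+K) * (2 * m) * Φ1) ^ ((1/2:ℝ)^n : ℝ) := by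
            refine mul_le_mul' (mul_le_mul' ?_ le_rfl) ?_
            · exact ENNReal.rpow_le_rpow_of_exponent_le hM1 hS
            · exact ENNReal.rpow_le_rpow hcrude hεn
        _ = M ^ (4:ℝ) * (Φ1 ^ ((1 - (1/2:ℝ)^n) : ℝ) * Φ1 ^ ((1/2:ℝ)^n : ℝ)) *
            (((Cd : ℝ≥0∞) ^ n) ^ ((1/2:ℝ)^n : ℝ) *
             ((Cd : ℝ≥0∞) ^ K * (2 * m)) ^ ((1/2:ℝ)^n : ℝ)) := by
            rw [show (Cd : ℝ≥0∞) ^ (n+K) * (2 * (m:ℝ≥0∞)) * Φ1 =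
              ((Cd : ℝ≥0∞) ^ n * ((Cd : ℝ≥0∞) ^ K * (2 * m))) * Φ1 by rw [pow_add]; ring]
            rw [ENNReal.mul_rpow_of_nonneg _ _ hεn, ENNReal.mul_rpow_of_nonneg _ _ hεn]
            ring
        _ ≤ M ^ (4:ℝ) * Φ1 * ((Cd : ℝ≥0∞) * (g : ℝ≥0∞) ^ ((1/2:ℝ)^n)) := by
            have hΦ : Φ1 ^ ((1 - (1/2:ℝ)^n) : ℝ) * Φ1 ^ ((1/2:ℝ)^n : ℝ) = Φ1 := by
              rw [← ENNReal.rpow_add _ _ hne htop]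
              norm_num
            rw [hΦ]
            have hCdn : ((Cd : ℝ≥0∞) ^ n) ^ ((1/2:ℝ)^n : ℝ) ≤ (Cd : ℝ≥0∞) := by
              rw [← ENNReal.rpow_natCast (Cd : ℝ≥0∞) n, ← ENNReal.rpow_mul]
              calc ((Cd : ℝ≥0∞)) ^ ((n:ℝ) * (1/2:ℝ)^n) ≤ (Cd : ℝ≥0∞) ^ (1:ℝ) :=
                  ENNReal.rpow_le_rpow_of_exponent_le hCd1' (nhalf_le n)
                _ = (Cd : ℝ≥0∞) := ENNReal.rpow_one _
            have hgle : ((Cd : ℝ≥0∞) ^ K * (2 * m)) ^ ((1/2:ℝ)^n : ℝ) ≤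
                (g : ℝ≥0∞) ^ ((1/2:ℝ)^n) := by
              refine ENNReal.rpow_le_rpow ?_ hεn
              rw [hgcoe]
              exact le_self_add
            gcongr
        _ = _ := by ring
    -- finiteness
    have hPhiLamTop : Phi2 μ x r a m lam lam ≠ ⊤ := by
      have := crude_bound μ Cd hC K hlam hlamK x r a m
      exact ne_top_of_le_ne_top (ENNReal.mul_ne_top (ENNReal.mul_ne_top
        (ENNReal.pow_ne_top ENNReal.coe_ne_top) (by simp [ENNReal.mul_ne_top])) htop) this
    set A : ℝ≥0∞ := M ^ (4:ℝ) * Φ1 * (Cd : ℝ≥0∞) with hA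
    have hAtop : A ≠ ⊤ := by
      rw [hA]
      exact ENNReal.mul_ne_top (ENNReal.mul_ne_top
        (ENNReal.rpow_ne_top_of_nonneg (by norm_num) hMtop) htop) ENNReal.coe_ne_top
    have hreal : ∀ n : ℕ, (Phi2 μ x r a m lam lam).toReal ≤ A.toReal * (g:ℝ) ^ ((1/2:ℝ)^n) := by
      intro n
      have hεn : (0:ℝ) ≤ (1/2:ℝ)^n := by positivity
      have hrhs : A * (g : ℝ≥0∞) ^ ((1/2:ℝ)^n) ≠ ⊤ :=
        ENNReal.mul_ne_top hAtop (ENNReal.rpow_ne_top_of_nonneg hεn ENNReal.coe_ne_top)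
      have h := ENNReal.toReal_mono hrhs (key n)
      rwa [ENNReal.toReal_mul, ← ENNReal.toReal_rpow, ENNReal.coe_toReal] at h
    have hlim : Tendsto (fun n : ℕ => A.toReal * (g:ℝ) ^ ((1/2:ℝ)^n)) atTop
        (𝓝 (A.toReal * (g:ℝ) ^ (0:ℝ))) := by
      have hε : Tendsto (fun n : ℕ => (1/2:ℝ)^n) atTop (𝓝 0) :=
        tendsto_pow_atTop_nhds_zero_of_lt_one (by norm_num) (by norm_num)
      have hcont : ContinuousAt (fun y : ℝ => (g:ℝ) ^ y) 0 :=
        Real.continuousAt_const_rpow hg0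
      exact (hcont.tendsto.comp hε).const_mul _
    rw [Real.rpow_zero, mul_one] at hlim
    have hfinal : (Phi2 μ x r a m lam lam).toReal ≤ A.toReal :=
      ge_of_tendsto hlim (Filter.Eventually.of_forall hreal)
    have : Phi2 μ x r a m lam lam ≤ A :=
      (ENNReal.toReal_le_toReal hPhiLamTop hAtop).1 hfinal
    refine this.trans (le_of_eq ?_)
    rw [hA, hM]
    rw [show ((4:ℝ)) = ((4:ℕ):ℝ) by norm_num, ENNReal.rpow_natCast]
    ring

end DoublingBalls


open DoublingBalls in
/-- If `μ` is a Borel measure on a metric space that is doubling with constant `Cμ` and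
`λ ≥ 1`, then there is a constant `C = C(λ, Cμ)` such that for every countable collection of
pairwise disjoint balls `B(xᵢ, rᵢ)` and non-negative numbers `aᵢ`,
`∫ (∑ᵢ aᵢ χ_{B(xᵢ, λrᵢ)})² dμ ≤ C ∫ (∑ᵢ aᵢ χ_{B(xᵢ, rᵢ)})² dμ`. -/
theorem doubling_dilated_balls_L2 (Cμ : ℝ≥0) (lam : ℝ) (hlam : 1 ≤ lam) :
    ∃ C : ℝ≥0, ∀ (X : Type u) [MetricSpace X] [MeasurableSpace X] [BorelSpace X]
      (μ : Measure X),
      (∀ (x : X) (r : ℝ), 0 < r → μ (Metric.ball x (2 * r)) ≤ Cμ * μ (Metric.ball x r)) →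
      ∀ (x : ℕ → X) (r : ℕ → ℝ) (a : ℕ → ℝ≥0),
        (Pairwise fun i j => Disjoint (Metric.ball (x i) (r i)) (Metric.ball (x j) (r j))) →
        ∫⁻ y, (∑' i, (Metric.ball (x i) (lam * r i)).indicator
            (fun _ => (a i : ℝ≥0∞)) y) ^ 2 ∂μ ≤
          C * ∫⁻ y, (∑' i, (Metric.ball (x i) (r i)).indicator
            (fun _ => (a i : ℝ≥0∞)) y) ^ 2 ∂μ := by
  obtain ⟨K, hK⟩ : ∃ K : ℕ, lam + 1 ≤ 2 ^ K := by
    obtain ⟨K, hK⟩ := pow_unbounded_of_one_lt (lam + 1) one_lt_two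
    exact ⟨K, hK.le⟩
  set Cd : ℝ≥0 := max Cμ 1 with hCdDef
  refine ⟨(2 * Cd ^ (K+1)) ^ 4 * Cd, ?_⟩
  intro X _ _ _ μ hdbl x r a _
  have hCd1 : 1 ≤ Cd := le_max_right _ _
  have hC : ∀ (y : X) (ρ : ℝ), 0 < ρ → μ (ball y (2 * ρ)) ≤ Cd * μ (ball y ρ) := by
    intro y ρ hρ
    refine (hdbl y ρ hρ).trans ?_
    gcongr
    exact le_max_left Cμ 1
  have sqmono : ∀ {u v : ℝ≥0∞}, u ≤ v → u ^ 2 ≤ v ^ 2 := by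
    intro u v h
    rw [pow_two, pow_two]
    exact mul_le_mul' h h
  have hCcoe : (((2 * Cd ^ (K+1)) ^ 4 * Cd : ℝ≥0) : ℝ≥0∞) =
      (2 * (Cd : ℝ≥0∞) ^ (K+1)) ^ 4 * (Cd : ℝ≥0∞) := by
    push_cast
    ring
  -- pointwise identification of the square of the tsum as a sup of squares of partial sums
  have hpt : ∀ y : X, (∑' i, (ball (x i) (lam * r i)).indicator
      (fun _ => (a i : ℝ≥0∞)) y) ^ 2 = ⨆ m, (pf x r a m lam y) ^ 2 := by
    intro y
    have hmono : Monotone fun m => (pf x r a m lam y) ^ 2 := by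
      intro m₁ m₂ h
      refine sqmono ?_
      exact Finset.sum_le_sum_of_subset (Finset.range_subset_range.2 h)
    have htd : Tendsto (fun m => pf x r a m lam y) atTop
        (𝓝 (∑' i, (ball (x i) (lam * r i)).indicator (fun _ => (a i : ℝ≥0∞)) y)) :=
      ENNReal.tendsto_nat_tsum _
    have htd2 : Tendsto (fun m => (pf x r a m lam y) ^ 2) atTop
        (𝓝 ((∑' i, (ball (x i) (lam * r i)).indicator (fun _ => (a i : ℝ≥0∞)) y) ^ 2)) :=
      ((ENNReal.continuous_pow 2).continuousAt.tendsto).comp htd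
    exact tendsto_nhds_unique htd2 (tendsto_atTop_iSup hmono)
  calc ∫⁻ y, (∑' i, (ball (x i) (lam * r i)).indicator (fun _ => (a i : ℝ≥0∞)) y) ^ 2 ∂μ
      = ∫⁻ y, ⨆ m, (pf x r a m lam y) ^ 2 ∂μ := lintegral_congr hpt
    _ = ⨆ m, ∫⁻ y, (pf x r a m lam y) ^ 2 ∂μ := by
        refine lintegral_iSup (fun m => ?_) (fun m₁ m₂ h y => ?_)
        · exact (pf_meas x r a m lam).pow_const 2
        · exact sqmono (Finset.sum_le_sum_of_subset (Finset.range_subset_range.2 h))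
    _ ≤ ⨆ m : ℕ, (((2 * Cd ^ (K+1)) ^ 4 * Cd : ℝ≥0) : ℝ≥0∞) *
        ∫⁻ y, (∑' i, (ball (x i) (r i)).indicator (fun _ => (a i : ℝ≥0∞)) y) ^ 2 ∂μ := by
        refine iSup_mono fun m => ?_
        rw [pf_sq μ x r a m lam, hCcoe]
        refine (final_bound μ Cd hCd1 hC lam hlam K hK x r a m).trans ?_
        refine mul_le_mul' le_rfl ?_
        rw [← pf_sq μ x r a m 1]
        refine lintegral_mono fun y => sqmono ?_
        have : pf x r a m 1 y = ∑ i ∈ Finset.range m,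
            (ball (x i) (r i)).indicator (fun _ => (a i : ℝ≥0∞)) y := by
          rw [pf]
          simp only [one_mul]
        rw [this]
        exact ENNReal.sum_le_tsum _
    _ = _ := by
        rw [iSup_const]
end

section
/- The set of Lipschitz functions h : [0,1] → ℝ satisfying h(0) = 0, h(1) ∈ ℤ, and h(k/2ⁿ) = 2l/2ⁿ for some l ∈ ℤ for every reduced dyadic rational k/2ⁿ ∈ (0,1) (n ∈ ℕ, k odd), is uncountable. -/
open Metric Set MeasureTheory
open scoped NNReal ENNReal

noncomputable section

/-- The additive group `ℒ`: Lipschitz functions `h : [0,1] → ℝ` with `h 0 = 0`, `h 1 ∈ ℤ`,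
and `h(k/2ⁿ) ∈ (2/2ⁿ)·ℤ` for every reduced dyadic rational `k/2ⁿ ∈ (0,1)` (`k` odd). -/
def DyadicLipSet : Set (↥(Set.Icc (0 : ℝ) 1) → ℝ) :=
  {h | (∃ L : ℝ≥0, LipschitzWith L h) ∧
    h ⟨0, Set.left_mem_Icc.mpr (by norm_num)⟩ = 0 ∧
    (∃ m : ℤ, h ⟨1, Set.right_mem_Icc.mpr (by norm_num)⟩ = (m : ℝ)) ∧
    ∀ (t : ↥(Set.Icc (0 : ℝ) 1)) (n k : ℕ), Odd k → k < 2 ^ n → (t : ℝ) = (k : ℝ) / 2 ^ n →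
      ∃ l : ℤ, h t = 2 * (l : ℝ) / 2 ^ n}

/-- Complement of the union of the chosen dyadic intervals. -/
def dyadicCompl (S : Set ℕ) : Set ℝ :=
  (⋃ n ∈ S, Ioo ((1 : ℝ) / 2 ^ (n + 1)) ((1 : ℝ) / 2 ^ n))ᶜ

/-- The tent-sum function associated to `S`. -/
def dyadicFun (S : Set ℕ) : ↥(Set.Icc (0 : ℝ) 1) → ℝ :=
  fun t => 2 * infDist (t : ℝ) (dyadicCompl S)

lemma pow_notMem_Ioo (p j : ℕ) :
    (1 : ℝ) / 2 ^ p ∉ Ioo ((1 : ℝ) / 2 ^ (j + 1)) ((1 : ℝ) / 2 ^ j) := by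
  rintro ⟨h1, h2⟩
  rcases le_or_gt p j with h | h
  · have : (1 : ℝ) / 2 ^ j ≤ 1 / 2 ^ p := by gcongr <;> norm_num
    linarith
  · have : (1 : ℝ) / 2 ^ p ≤ 1 / 2 ^ (j + 1) := by
      gcongr
      · norm_num
      · omega
    linarith

lemma pow_mem_dyadicCompl (S : Set ℕ) (p : ℕ) : (1 : ℝ) / 2 ^ p ∈ dyadicCompl S := by
  simp only [dyadicCompl, mem_compl_iff, mem_iUnion, not_exists]
  intro j _
  exact pow_notMem_Ioo p j

lemma zero_mem_dyadicCompl (S : Set ℕ) : (0 : ℝ) ∈ dyadicCompl S := by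
  simp only [dyadicCompl, mem_compl_iff, mem_iUnion, not_exists]
  intro j _ h
  have h1 := h.1
  have : (0 : ℝ) < 1 / 2 ^ (j + 1) := by positivity
  linarith

/-- infDist to a set avoiding an open interval, at a point in the interval. -/
lemma infDist_eq_min {C : Set ℝ} {a b x : ℝ} (ha : a ∈ C) (hb : b ∈ C)
    (hC : ∀ y ∈ C, y ∉ Ioo a b) (hx : x ∈ Ioo a b) :
    infDist x C = min (x - a) (b - x) := by
  apply le_antisymm
  · apply le_min
    · have := infDist_le_dist_of_mem (x := x) ha
      rwa [Real.dist_eq, abs_of_pos (by linarith [hx.1])] at this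
    · have := infDist_le_dist_of_mem (x := x) hb
      rwa [Real.dist_eq, abs_of_neg (by linarith [hx.2]), neg_sub] at this
  · by_contra hlt
    push_neg at hlt
    rw [infDist_lt_iff ⟨a, ha⟩] at hlt
    obtain ⟨y, hy, hdy⟩ := hlt
    refine absurd hdy (not_lt.mpr ?_)
    rcases not_and_or.mp ((mem_Ioo).not.mp (hC y hy)) with h | h
    · push_neg at h
      rw [Real.dist_eq]
      calc min (x - a) (b - x) ≤ x - a := min_le_left _ _
        _ ≤ x - y := by linarith
        _ ≤ |x - y| := le_abs_self _
    · push_neg at h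
      rw [Real.dist_eq]
      calc min (x - a) (b - x) ≤ b - x := min_le_right _ _
        _ ≤ y - x := by linarith
        _ ≤ |x - y| := by rw [abs_sub_comm]; exact le_abs_self _

lemma dyadicFun_mem (S : Set ℕ) : dyadicFun S ∈ DyadicLipSet := by
  refine ⟨⟨2, ?_⟩, ?_, ⟨0, ?_⟩, ?_⟩
  · apply LipschitzWith.of_dist_le_mul
    intro u v
    have h := (lipschitz_infDist_pt (dyadicCompl S)).dist_le_mul (u : ℝ) (v : ℝ)
    rw [NNReal.coe_one, one_mul] at h
    simp only [dyadicFun, Real.dist_eq] at h ⊢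
    have e : |2 * infDist (↑u) (dyadicCompl S) - 2 * infDist (↑v) (dyadicCompl S)|
        = 2 * |infDist (↑u) (dyadicCompl S) - infDist (↑v) (dyadicCompl S)| := by
      rw [show (2:ℝ) * infDist (↑u) (dyadicCompl S) - 2 * infDist (↑v) (dyadicCompl S)
        = 2 * (infDist (↑u) (dyadicCompl S) - infDist (↑v) (dyadicCompl S)) by ring, abs_mul]
      norm_num
    rw [e]
    have : dist u v = |(u:ℝ) - (v:ℝ)| := by rw [Subtype.dist_eq, Real.dist_eq]
    rw [this]
    push_cast
    linarith
  · simp [dyadicFun, infDist_zero_of_mem (zero_mem_dyadicCompl S)]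
  · have : (1 : ℝ) ∈ dyadicCompl S := by simpa using pow_mem_dyadicCompl S 0
    simp [dyadicFun, infDist_zero_of_mem this]
  · intro t n k _hk hkn ht
    by_cases hmem : (t : ℝ) ∈ dyadicCompl S
    · exact ⟨0, by simp [dyadicFun, infDist_zero_of_mem hmem]⟩
    · -- t lies in one of the open intervals
      simp only [dyadicCompl, mem_compl_iff, not_not, mem_iUnion] at hmem
      obtain ⟨m, hmS, hIoo⟩ := hmem
      have hk1 : (1 : ℝ) ≤ k := by
        have hne : k ≠ 0 := by
          rintro rfl
          have h0 : (t:ℝ) = 0 := by rw [ht]; simp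
          have := hIoo.1
          rw [h0] at this
          have hpos : (0:ℝ) < 1 / 2 ^ (m+1) := by positivity
          linarith
        exact_mod_cast Nat.one_le_iff_ne_zero.mpr hne
      have h2n : (0:ℝ) < 2 ^ n := by positivity
      have hmn : m + 1 ≤ n := by
        by_contra h
        push_neg at h
        have hnm : n ≤ m := by omega
        have : (1:ℝ) / 2 ^ m ≤ 1 / 2 ^ n := by gcongr <;> norm_num
        have h2 := hIoo.2
        rw [ht] at h2
        have : (k:ℝ) / 2^n < 1 / 2^n := lt_of_lt_of_le h2 this
        rw [div_lt_div_iff₀ h2n h2n] at this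
        nlinarith
      have hd : infDist (t : ℝ) (dyadicCompl S) =
          min ((t:ℝ) - 1 / 2 ^ (m+1)) (1 / 2 ^ m - t) := by
        apply infDist_eq_min (pow_mem_dyadicCompl S (m+1)) (pow_mem_dyadicCompl S m)
          _ hIoo
        intro y hy hy'
        exact hy (mem_biUnion hmS hy')
      refine ⟨min ((k:ℤ) - 2 ^ (n - m - 1)) (2 ^ (n - m) - k), ?_⟩
      have e1 : (1:ℝ) / 2 ^ (m+1) = (2:ℝ) ^ (n - m - 1) / 2 ^ n := by
        rw [div_eq_div_iff (by positivity : (2:ℝ)^(m+1) ≠ 0) h2n.ne', one_mul, ← pow_add]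
        congr 1; omega
      have e2 : (1:ℝ) / 2 ^ m = (2:ℝ) ^ (n - m) / 2 ^ n := by
        rw [div_eq_div_iff (by positivity : (2:ℝ)^m ≠ 0) h2n.ne', one_mul, ← pow_add]
        congr 1; omega
      rw [dyadicFun]
      rw [hd, ht, e1, e2, div_sub_div_same, ← sub_div, min_div_div_right h2n.le]
      push_cast
      ring

lemma dyadicFun_injective : Function.Injective dyadicFun := by
  intro S T hST
  classical
  have key : ∀ (S : Set ℕ) (n : ℕ),
      dyadicFun S ⟨3 / 2 ^ (n + 2), by
        constructor
        · positivity
        · rw [div_le_one (by positivity)]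
          calc (3:ℝ) ≤ 2 ^ 2 := by norm_num
            _ ≤ 2 ^ (n + 2) := pow_le_pow_right₀ (by norm_num) (by omega)⟩ =
        if n ∈ S then 1 / 2 ^ (n + 1) else 0 := by
    intro S n
    have hIoo : (3:ℝ) / 2 ^ (n + 2) ∈ Ioo ((1:ℝ) / 2 ^ (n+1)) ((1:ℝ) / 2 ^ n) := by
      constructor
      · rw [div_lt_div_iff₀ (by positivity) (by positivity)]
        have : (2:ℝ) ^ (n+2) = 2 ^ (n+1) * 2 := by ring
        rw [this]; nlinarith [pow_pos (by norm_num : (0:ℝ) < 2) (n+1)]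
      · rw [div_lt_div_iff₀ (by positivity) (by positivity)]
        have : (2:ℝ) ^ (n+2) = 2 ^ n * 4 := by ring
        rw [this]; nlinarith [pow_pos (by norm_num : (0:ℝ) < 2) n]
    by_cases hn : n ∈ S
    · rw [if_pos hn]
      have hd : infDist ((3:ℝ) / 2 ^ (n + 2)) (dyadicCompl S) =
          min ((3:ℝ)/2^(n+2) - 1 / 2 ^ (n+1)) (1 / 2 ^ n - 3/2^(n+2)) := by
        apply infDist_eq_min (pow_mem_dyadicCompl S (n+1)) (pow_mem_dyadicCompl S n)
          _ hIoo
        intro y hy hy'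
        exact hy (mem_biUnion hn hy')
      have e1 : (3:ℝ)/2^(n+2) - 1 / 2 ^ (n+1) = 1 / 2 ^ (n+2) := by
        field_simp; ring
      have e2 : (1:ℝ) / 2 ^ n - 3/2^(n+2) = 1 / 2 ^ (n+2) := by
        field_simp; ring
      simp only [dyadicFun, hd, e1, e2, min_self]
      field_simp; ring
    · rw [if_neg hn]
      have hmem : (3:ℝ) / 2 ^ (n + 2) ∈ dyadicCompl S := by
        simp only [dyadicCompl, mem_compl_iff, mem_iUnion, not_exists]
        intro j hj h
        have hjn : j ≠ n := by rintro rfl; exact hn hj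
        -- the Ioo's for different indices are disjoint from our point
        rcases lt_or_gt_of_ne hjn with hlt | hgt
        · -- j < n : 3/2^(n+2) < 1/2^(n) ≤ 1/2^(j+1), contradict lower bound
          have h1' : (3:ℝ) / 2 ^ (n+2) < 1 / 2 ^ n := hIoo.2
          have h2 : (1:ℝ) / 2 ^ n ≤ 1 / 2 ^ (j+1) := by gcongr <;> [norm_num; omega]
          linarith [h.1]
        · -- j > n : 1/2^j ≤ 1/2^(n+1) < 3/2^(n+2), contradict upper bound
          have h2 : (1:ℝ) / 2 ^ j ≤ 1 / 2 ^ (n+1) := by gcongr <;> [norm_num; omega]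
          linarith [h.2, hIoo.1]
      simp [dyadicFun, infDist_zero_of_mem hmem]
  ext n
  have h1 := key S n
  have h2 := key T n
  rw [hST] at h1
  rw [h1] at h2
  have hpos : (0:ℝ) < 1 / 2 ^ (n + 1) := by positivity
  constructor
  · intro hS
    by_contra hT
    rw [if_pos hS, if_neg hT] at h2
    linarith
  · intro hT
    by_contra hS
    rw [if_neg hS, if_pos hT] at h2
    linarith

/-- The set `ℒ` of Lipschitz functions `h : [0,1] → ℝ` with `h 0 = 0`, `h 1 ∈ ℤ` and
`h(k/2ⁿ) = 2l/2ⁿ` at every reduced dyadic rational, is uncountable. -/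
theorem dyadicLipSet_uncountable : ¬ DyadicLipSet.Countable := by
  intro hc
  have hsub : range (dyadicFun) ⊆ DyadicLipSet := by
    rintro _ ⟨S, rfl⟩; exact dyadicFun_mem S
  have hrc : (range dyadicFun).Countable := hc.mono hsub
  have : (univ : Set (Set ℕ)).Countable := by
    have := hrc.preimage dyadicFun_injective
    simpa using this
  have : Countable (Set ℕ) := countable_univ_iff.mp this
  obtain ⟨f, hf⟩ := exists_injective_nat (Set ℕ)
  exact Function.cantor_injective f hf
end
end
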